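/- arXiv:1404.0545 — 2 statements merged into one kernel-verified Lean document; each statement's English description precedes it below -/
import Mathlib

section
/- In the infinite-term encoding of Turing Machines into ACPC, the encoding [[F]] = ∏_{u∈F} ![[u]] of the transition function F does not reduce: there is no ACPC process Q such that [[F]] → Q. -/
open scoped Classical

noncomputable section



namespace ACPC

/-- Names: a countable collection. -/
abbrev Name := ℕ

/-- Shape functor for (possibly infinite) ACPC terms: leaves labelled by a name,
or binary compound nodes. -/
def TermP : PFunctor.{0} :=
  ⟨Option Name, fun o => match o with
    | some _ => Empty
    | none => Bool⟩

/-- ACPC terms: names and compounds `s • t`, possibly infinite (coinductive trees). -/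
def Term : Type := TermP.M

namespace Term

/-- The term consisting of a single name. -/
def name (n : Name) : Term := PFunctor.M.mk ⟨some n, fun e => e.elim⟩

/-- The compound `s • t` of two terms. -/
def comp (s t : Term) : Term := PFunctor.M.mk ⟨none, fun b => bif b then t else s⟩

/-- `Occurs n t` : the name `n` occurs (at some finite depth) in the term `t`. -/
inductive Occurs (n : Name) : Term → Prop
  | name : Occurs n (Term.name n)
  | compL {s t : Term} : Occurs n s → Occurs n (Term.comp s t)
  | compR {s t : Term} : Occurs n t → Occurs n (Term.comp s t)

/-- Free names of a term. -/
def fn (t : Term) : Set Name := {n | Occurs n t}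

/-- Rename every name occurring in a term. -/
def renameStep (f : Name → Name) (s : Term) : TermP.Obj Term :=
  match PFunctor.M.dest s with
  | ⟨some n, _⟩ => ⟨some (f n), fun e => e.elim⟩
  | ⟨none, g⟩ => ⟨none, g⟩

def rename (f : Name → Name) (t : Term) : Term :=
  PFunctor.M.corec (renameStep f) t

end Term

/-- Substitutions: partial maps from names to terms. -/
def Subst : Type := Name → Option Term

namespace Subst

/-- The empty substitution `{}`. -/
def empty : Subst := fun _ => none

/-- The singleton substitution `{t/n}`. -/
def single (n : Name) (t : Term) : Subst := fun m => if m = n then some t else none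

/-- Union of two substitutions (left-biased; applied to disjoint domains). -/
def union (σ ρ : Subst) : Subst := fun n =>
  match σ n with
  | some t => some t
  | none => ρ n

/-- The domain of a substitution. -/
def dom (σ : Subst) : Set Name := {n | σ n ≠ none}

/-- Remove a set of names from the domain of a substitution. -/
def removeSet (σ : Subst) (s : Set Name) : Subst := fun n => if n ∈ s then none else σ n

end Subst

/-- Applying a substitution to a (possibly infinite) term, replacing named leaves
by the corresponding terms. -/
def Term.substStep (σ : Subst) (x : Term × Bool) : TermP.Obj (Term × Bool) :=
  match PFunctor.M.dest x.1, x.2 with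
  | ⟨some n, _⟩, true => ⟨some n, fun e => e.elim⟩
  | ⟨some n, _⟩, false =>
      match σ n with
      | some u =>
          match PFunctor.M.dest u with
          | ⟨a, g⟩ => ⟨a, fun b => (g b, true)⟩
      | none => ⟨some n, fun e => e.elim⟩
  | ⟨none, g⟩, v => ⟨none, fun b => (g b, v)⟩

/-- Applying a substitution to a (possibly infinite) term. -/
def Term.subst (σ : Subst) (t : Term) : Term :=
  PFunctor.M.corec (Term.substStep σ) (t, false)

/-- ACPC patterns: binding names `λn`, name-matches `n`, and compounds `p • q`. -/
inductive Pattern : Type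
  | bind (n : Name)
  | nmatch (n : Name)
  | comp (p q : Pattern)

namespace Pattern

/-- Binding names of a pattern. -/
def bn : Pattern → Finset Name
  | bind n => {n}
  | nmatch _ => ∅
  | comp p q => p.bn ∪ q.bn

/-- Name-matches of a pattern. -/
def nm : Pattern → Finset Name
  | bind _ => ∅
  | nmatch n => {n}
  | comp p q => p.nm ∪ q.nm

/-- Well-formed patterns: each binding name occurs at most once. -/
def wf : Pattern → Prop
  | bind _ => True
  | nmatch _ => True
  | comp p q => p.wf ∧ q.wf ∧ Disjoint p.bn q.bn

/-- Rename only the binding names of a pattern. -/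
def renameBn (f : Name → Name) : Pattern → Pattern
  | bind n => bind (f n)
  | nmatch n => nmatch n
  | comp p q => comp (p.renameBn f) (q.renameBn f)

/-- Rename all the names of a pattern. -/
def rename (f : Name → Name) : Pattern → Pattern
  | bind n => bind (f n)
  | nmatch n => nmatch (f n)
  | comp p q => comp (p.rename f) (q.rename f)

/-- Apply a substitution to the name-matches of a pattern (a name-match is
replaced only when the substitution maps it to a name). -/
def subst (σ : Subst) : Pattern → Pattern
  | bind n => bind n
  | nmatch n =>
      match σ n with
      | some u =>
          match (PFunctor.M.dest u).1 with
          | some m => nmatch m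
          | none => nmatch n
      | none => nmatch n
  | comp p q => comp (p.subst σ) (q.subst σ)

end Pattern

/-- The matching `{t // p}` of a term `t` against a pattern `p`, yielding a
substitution: `{t // λn} = {t/n}`, `{n // n} = {}`, and compounds match
componentwise; undefined (no derivation) otherwise. -/
inductive Matches : Term → Pattern → Subst → Prop
  | bind (t : Term) (n : Name) : Matches t (.bind n) (Subst.single n t)
  | nmatch (n : Name) : Matches (Term.name n) (.nmatch n) Subst.empty
  | comp {s t : Term} {p q : Pattern} {σ ρ : Subst} :
      Matches s p σ → Matches t q ρ →
      Matches (Term.comp s t) (.comp p q) (σ.union ρ)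

/-- ACPC processes. -/
inductive Proc : Type
  | nil
  | par (P Q : Proc)
  | rep (P : Proc)
  | res (n : Name) (P : Proc)
  | inp (p : Pattern) (P : Proc)
  | out (t : Term) (P : Proc)

namespace Proc

/-- Free names of a process. -/
def fn : Proc → Set Name
  | nil => ∅
  | par P Q => P.fn ∪ Q.fn
  | rep P => P.fn
  | res n P => P.fn \ {n}
  | inp p P => ↑p.nm ∪ (P.fn \ ↑p.bn)
  | out t P => t.fn ∪ P.fn

/-- Rename all names of a process (including binders). -/
def rename (f : Name → Name) : Proc → Proc
  | nil => nil
  | par P Q => par (P.rename f) (Q.rename f)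
  | rep P => rep (P.rename f)
  | res n P => res (f n) (P.rename f)
  | inp p P => inp (p.rename f) (P.rename f)
  | out t P => out (t.rename f) (P.rename f)

/-- Apply a substitution to a process. -/
def subst (σ : Subst) : Proc → Proc
  | nil => nil
  | par P Q => par (P.subst σ) (Q.subst σ)
  | rep P => rep (P.subst σ)
  | res n P => res n (P.subst (σ.removeSet {n}))
  | inp p P => inp (p.subst (σ.removeSet ↑p.bn)) (P.subst (σ.removeSet ↑p.bn))
  | out t P => out (t.subst σ) (P.subst σ)

end Proc

/-- The transposition of two names. -/
def transp (a b : Name) : Name → Name := fun n => if n = a then b else if n = b then a else n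

/-- α-conversion: renaming of a bound name via a fresh transposition. -/
inductive AlphaEq : Proc → Proc → Prop
  | res {a b : Name} {P : Proc} :
      b ∉ P.fn → AlphaEq (.res a P) (.res b (P.rename (transp a b)))
  | inp {p : Pattern} {P : Proc} {m b : Name} :
      m ∈ p.bn → b ∉ p.bn → b ∉ (Proc.inp p P).fn →
      AlphaEq (.inp p P) (.inp (p.renameBn (transp m b)) (P.rename (transp m b)))

/-- Structural equivalence of ACPC processes. -/
inductive StructEq : Proc → Proc → Prop
  | refl (P) : StructEq P P
  | symm {P Q} : StructEq P Q → StructEq Q P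
  | trans {P Q R} : StructEq P Q → StructEq Q R → StructEq P R
  | alpha {P Q} : AlphaEq P Q → StructEq P Q
  | par_nil (P) : StructEq (.par P .nil) P
  | par_comm (P Q) : StructEq (.par P Q) (.par Q P)
  | par_assoc (P Q R) : StructEq (.par P (.par Q R)) (.par (.par P Q) R)
  | res_nil (a) : StructEq (.res a .nil) .nil
  | res_res (a b P) : StructEq (.res a (.res b P)) (.res b (.res a P))
  | res_par {a : Name} (P Q) : a ∉ Proc.fn P → StructEq (.par P (.res a Q)) (.res a (.par P Q))
  | rep (P) : StructEq (.rep P) (.par P (.rep P))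
  | par_congr {P P' Q Q'} : StructEq P P' → StructEq Q Q' → StructEq (.par P Q) (.par P' Q')
  | res_congr {P P'} (a) : StructEq P P' → StructEq (.res a P) (.res a P')
  | rep_congr {P P'} : StructEq P P' → StructEq (.rep P) (.rep P')
  | inp_congr {P P'} (p) : StructEq P P' → StructEq (.inp p P) (.inp p P')
  | out_congr {P P'} (t) : StructEq P P' → StructEq (.out t P) (.out t P')

/-- Reduction of ACPC processes: generated by the interaction axiom, closed
under parallel composition, restriction and structural equivalence. -/
inductive Reduces : Proc → Proc → Prop
  | interact {t : Term} {P : Proc} {q : Pattern} {Q : Proc} {σ : Subst} :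
      Matches t q σ → Reduces (.par (.out t P) (.inp q Q)) (.par P (Q.subst σ))
  | par {P P' : Proc} (Q) : Reduces P P' → Reduces (.par P Q) (.par P' Q)
  | res {P P'} (n) : Reduces P P' → Reduces (.res n P) (.res n P')
  | struct {P P' Q Q'} : StructEq P P' → Reduces P' Q' → StructEq Q' Q → Reduces P Q

end ACPC
namespace ACPC

/-- Directions for a Turing Machine head. -/
inductive Dir : Type
  | L
  | R

/-- Transition tuples `⟨q₁, s₂, s₃, d₄, q₅⟩`. -/
abbrev Tuple := Name × Name × Name × Dir × Name

/-- A Turing Machine: a finite alphabet of symbols (containing the blank),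
a finite set of states, and a transition function given as a finite set of
tuples; states and symbols are (distinct) names. -/
structure Machine where
  symbols : Finset Name
  blank : Name
  blank_mem : blank ∈ symbols
  states : Finset Name
  states_symbols : Disjoint states symbols
  trans : Finset Tuple
  trans_mem : ∀ u ∈ trans,
    u.1 ∈ states ∧ u.2.1 ∈ symbols ∧ u.2.2.1 ∈ symbols ∧ u.2.2.2.2 ∈ states

/-- A two-sided infinite tape with a designated current head position:
`left i` is the cell `i+1` steps to the left of the head, `head` the current
cell, and `right i` the cell `i+1` steps to the right. -/
structure Tape where
  left : ℕ → Name
  head : Name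
  right : ℕ → Name

/-- The tape only carries symbols of the machine. -/
def Tape.InAlphabet (M : Machine) (T : Tape) : Prop :=
  (∀ i, T.left i ∈ M.symbols) ∧ T.head ∈ M.symbols ∧ (∀ i, T.right i ∈ M.symbols)

/-- The tape is blank outside a finite region. -/
def Tape.FinitelyNonBlank (b : Name) (T : Tape) : Prop :=
  ∃ N, ∀ i, N ≤ i → T.left i = b ∧ T.right i = b

/-- Write the symbol `s₂` at the head position and move in direction `d`. -/
def Tape.step (T : Tape) (s₂ : Name) : Dir → Tape
  | .L => ⟨fun i => T.left (i + 1), T.left 0,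
      fun i => match i with | 0 => s₂ | (j + 1) => T.right j⟩
  | .R => ⟨fun i => match i with | 0 => s₂ | (j + 1) => T.left j,
      T.right 0, fun i => T.right (i + 1)⟩

/-- The transition relation of a Turing Machine on configurations (tape, current
state): a tuple of the transition function applies to the current state and the
symbol under the head. -/
inductive Machine.Step (M : Machine) : Tape × Name → Tape × Name → Prop
  | mk {T : Tape} {q s₂ q' : Name} {d : Dir} :
      (q, T.head, s₂, d, q') ∈ M.trans →
      Machine.Step M (T, q) (T.step s₂ d, q')

/-- Parallel composition of a list of processes. -/
def bigPar : List Proc → Proc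
  | [] => .nil
  | P :: Ps => .par P (bigPar Ps)

/-! ### The infinite-term encoding -/

/-- Encoding of one side of the tape (listed from the head outward) as an
infinite term `s₁ • (s₂ • (s₃ • …))`. -/
def encodeSide (f : ℕ → Name) : Term :=
  PFunctor.M.corec
    (fun (x : ℕ ⊕ Name) =>
      (match x with
      | .inl k => ⟨none, fun b => bif b then Sum.inl (k + 1) else Sum.inr (f k)⟩
      | .inr m => ⟨some m, fun e => e.elim⟩ : TermP.Obj (ℕ ⊕ Name)))
    (Sum.inl 0)

/-- Encoding `[[T]] = L • s_h • R` of a tape (with `•` associated to the right). -/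
def encodeTape (T : Tape) : Term :=
  .comp (encodeSide T.left) (.comp (.name T.head) (encodeSide T.right))

/-- Encoding of a transition tuple as an ACPC input process, using the four
reserved names `l`, `l1`, `r`, `r1`. -/
def encodeTuple (l l1 r r1 : Name) : Tuple → Proc
  | (qi, s1, s2, .L, qj) =>
      .inp (.comp (.nmatch qi)
              (.comp (.comp (.bind l1) (.bind l)) (.comp (.nmatch s1) (.bind r))))
        (.out (.comp (.name qj)
                (.comp (.name l) (.comp (.name l1) (.comp (.name s2) (.name r))))) .nil)
  | (qi, s1, s2, .R, qj) =>
      .inp (.comp (.nmatch qi)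
              (.comp (.bind l) (.comp (.nmatch s1) (.comp (.bind r1) (.bind r)))))
        (.out (.comp (.name qj)
                (.comp (.comp (.name s2) (.name l)) (.comp (.name r1) (.name r)))) .nil)

/-- Encoding `[[F]] = ∏_{u ∈ F} ![[u]]` of the transition function. -/
def encodeTrans (l l1 r r1 : Name) (F : Finset Tuple) : Proc :=
  bigPar (F.toList.map fun u => .rep (encodeTuple l l1 r r1 u))

/-- Encoding of a Turing Machine configuration:
`[[(S,Q,F,T,q)]] = ⟨q • [[T]]⟩0 | [[F]]`. -/
def encodeTM (l l1 r r1 : Name) (M : Machine) (T : Tape) (q : Name) : Proc :=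
  .par (.out (.comp (.name q) (encodeTape T)) .nil) (encodeTrans l l1 r r1 M.trans)

/-- The four reserved names are pairwise distinct and do not appear among the
symbols of the machine. -/
def Reserved (M : Machine) (l l1 r r1 : Name) : Prop :=
  l ∉ M.symbols ∧ l1 ∉ M.symbols ∧ r ∉ M.symbols ∧ r1 ∉ M.symbols ∧
    l ≠ l1 ∧ l ≠ r ∧ l ≠ r1 ∧ l1 ≠ r ∧ l1 ≠ r1 ∧ r ≠ r1

/-! ### The finite-term encoding -/

/-- `listToTerm [s₁, …, sᵢ] e = s₁ • (s₂ • (… • (sᵢ • e)))`. -/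
def listToTerm (L : List Name) (e : Name) : Term :=
  L.foldr (fun s t => Term.comp (Term.name s) t) (Term.name e)

/-- Finite encoding of one side of the tape (listed from the head outward):
the cells up to the last non-blank one, with the edge name `e` in place of the
remaining infinite sequence of blanks. -/
def encodeSideFin (b e : Name) (f : ℕ → Name) : Term :=
  if h : ∃ N, ∀ i, N ≤ i → f i = b then
    listToTerm ((List.range (Nat.find h)).map f) e
  else Term.name e

/-- Finite encoding `[[T]] = L • s_h • R` of a tape. -/
def encodeTapeFin (b e : Name) (T : Tape) : Term :=
  .comp (encodeSideFin b e T.left) (.comp (.name T.head) (encodeSideFin b e T.right))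

/-- The pattern of the first (main) replicated input in the finite encoding of
a transition tuple. -/
def finInputPat1 (l l1 r r1 : Name) : Tuple → Pattern
  | (qi, s1, _, .L, _) =>
      .comp (.nmatch qi) (.comp (.comp (.bind l1) (.bind l)) (.comp (.nmatch s1) (.bind r)))
  | (qi, s1, _, .R, _) =>
      .comp (.nmatch qi) (.comp (.bind l) (.comp (.nmatch s1) (.comp (.bind r1) (.bind r))))

/-- The pattern of the second (edge-detecting) replicated input in the finite
encoding of a transition tuple. -/
def finInputPat2 (e l l1 r r1 : Name) : Tuple → Pattern
  | (qi, s1, _, .L, _) =>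
      .comp (.nmatch qi) (.comp (.nmatch e) (.comp (.nmatch s1) (.bind r)))
  | (qi, s1, _, .R, _) =>
      .comp (.nmatch qi) (.comp (.bind l) (.comp (.nmatch s1) (.nmatch e)))

/-- Finite encoding of a transition tuple: two replicated inputs in parallel,
the first as in the infinite encoding and the second detecting the edge `e` of
the tape and inserting a new blank `b`. -/
def encodeTupleFin (b e l l1 r r1 : Name) : Tuple → Proc
  | (qi, s1, s2, .L, qj) =>
      .par
        (.rep (.inp (finInputPat1 l l1 r r1 (qi, s1, s2, .L, qj))
          (.out (.comp (.name qj)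
            (.comp (.name l) (.comp (.name l1) (.comp (.name s2) (.name r))))) .nil)))
        (.rep (.inp (finInputPat2 e l l1 r r1 (qi, s1, s2, .L, qj))
          (.out (.comp (.name qj)
            (.comp (.name e) (.comp (.name b) (.comp (.name s2) (.name r))))) .nil)))
  | (qi, s1, s2, .R, qj) =>
      .par
        (.rep (.inp (finInputPat1 l l1 r r1 (qi, s1, s2, .R, qj))
          (.out (.comp (.name qj)
            (.comp (.comp (.name s2) (.name l)) (.comp (.name r1) (.name r)))) .nil)))
        (.rep (.inp (finInputPat2 e l l1 r r1 (qi, s1, s2, .R, qj))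
          (.out (.comp (.name qj)
            (.comp (.comp (.name s2) (.name l)) (.comp (.name b) (.name e)))) .nil)))

/-- Finite encoding `[[F]] = ∏_{u ∈ F} [[u]]` of the transition function. -/
def encodeTransFin (b e l l1 r r1 : Name) (F : Finset Tuple) : Proc :=
  bigPar (F.toList.map (encodeTupleFin b e l l1 r r1))

/-- Finite encoding of a Turing Machine configuration. -/
def encodeTMFin (e l l1 r r1 : Name) (M : Machine) (T : Tape) (q : Name) : Proc :=
  .par (.out (.comp (.name q) (encodeTapeFin M.blank e T)) .nil)
    (encodeTransFin M.blank e l l1 r r1 M.trans)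

/-- The five reserved names (including the edge name `e`) are pairwise distinct
and do not appear among the symbols of the machine. -/
def ReservedFin (M : Machine) (e l l1 r r1 : Name) : Prop :=
  Reserved M l l1 r r1 ∧ e ∉ M.symbols ∧ e ≠ l ∧ e ≠ l1 ∧ e ≠ r ∧ e ≠ r1


/-- A process has an output in active (unguarded) position. -/
def Active : Proc → Prop
  | .nil => False
  | .par P Q => Active P ∨ Active Q
  | .rep P => Active P
  | .res _ P => Active P
  | .inp _ _ => False
  | .out _ _ => True

lemma active_rename (f : Name → Name) (P : Proc) : Active (P.rename f) ↔ Active P := by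
  induction P <;> simp [Proc.rename, Active, *]

lemma active_alpha {P Q : Proc} (h : AlphaEq P Q) : Active P ↔ Active Q := by
  cases h with
  | res _ => simp [Active, active_rename]
  | inp _ _ _ => simp [Active]

lemma active_struct {P Q : Proc} (h : StructEq P Q) : Active P ↔ Active Q := by
  induction h with
  | refl P => exact Iff.rfl
  | symm _ ih => exact ih.symm
  | trans _ _ ih1 ih2 => exact ih1.trans ih2
  | alpha h => exact active_alpha h
  | par_nil P => simp [Active]
  | par_comm P Q => simp [Active, or_comm]
  | par_assoc P Q R => simp [Active, or_assoc]
  | res_nil a => simp [Active]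
  | res_res a b P => simp [Active]
  | res_par P Q _ => simp [Active]
  | rep P => simp [Active]
  | par_congr _ _ ih1 ih2 => simp [Active, ih1, ih2]
  | res_congr a _ ih => simpa [Active] using ih
  | rep_congr _ ih => simpa [Active] using ih
  | inp_congr p _ _ => simp [Active]
  | out_congr t _ _ => simp [Active]

lemma active_of_reduces {P Q : Proc} (h : Reduces P Q) : Active P := by
  induction h with
  | interact _ => exact Or.inl trivial
  | par Q _ ih => exact Or.inl ih
  | res n _ ih => exact ih
  | struct h1 _ _ ih => exact (active_struct h1).mpr ih

lemma not_active_bigPar (L : List Proc) (h : ∀ P ∈ L, ¬ Active P) :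
    ¬ Active (bigPar L) := by
  induction L with
  | nil => simp [bigPar, Active]
  | cons P Ps ih =>
      intro hact
      rcases hact with h1 | h2
      · exact h P (by simp) h1
      · exact ih (fun Q hQ => h Q (by simp [hQ])) h2

/-- In the infinite-term encoding of Turing Machines into
ACPC, the encoding `[[F]] = ∏_{u ∈ F} ![[u]]` of the transition function `F`
does not reduce. -/
theorem transition_encoding_no_reduction (M : Machine) (l l1 r r1 : Name)
    (hres : Reserved M l l1 r r1) :
    ¬ ∃ Q : Proc, Reduces (encodeTrans l l1 r r1 M.trans) Q := by
  rintro ⟨Q, hQ⟩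
  refine not_active_bigPar _ ?_ (active_of_reduces hQ)
  intro P hP
  simp only [List.mem_map] at hP
  obtain ⟨u, _, rfl⟩ := hP
  obtain ⟨q1, s1, s2, d, q5⟩ := u
  cases d <;> simp [encodeTuple, Active]

end ACPC
end
end

section
/- In the encoding of Turing Machines into synchronous polyadic π-calculus, the process representing the current state q_i and tape, namely q_i s_h⟨l,r⟩.0 | ⟦…,b,s_a,…,s_g⟧_L | ⟦s_i,…,s_j,b,…⟧_R (where ⟦…⟧_L and ⟦…⟧_R are the chained-channel encodings of the left and right parts of the tape), does not reduce. -/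
open scoped Classical

noncomputable section



/-! ## Synchronous polyadic π-calculus (with a name-matching conditional),
with possibly infinite (coinductive) processes, so that the chained-channel
encoding of an infinite tape can be expressed. -/

namespace ACPC

/-- Head shapes of π-calculus processes. -/
inductive PiHead : Type
  | nil
  | par
  | rep
  | res (n : Name)
  | inp (a : Name) (xs : List Name)
  | out (a : Name) (bs : List Name)
  | ite (m n : Name)

/-- Arities of the head shapes. -/
def PiB : PiHead → Type
  | .nil => Empty
  | .par => Bool
  | .rep => Unit
  | .res _ => Unit
  | .inp _ _ => Unit
  | .out _ _ => Unit
  | .ite _ _ => Bool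

/-- Shape functor for π-calculus processes. -/
def PiP : PFunctor.{0} := ⟨PiHead, PiB⟩

/-- π-calculus processes (possibly infinite coinductive trees). -/
def PiProc : Type := PiP.M

namespace PiProc

def nil : PiProc := PFunctor.M.mk ⟨.nil, fun e => e.elim⟩
def par (P Q : PiProc) : PiProc := PFunctor.M.mk ⟨.par, fun b => bif b then Q else P⟩
def rep (P : PiProc) : PiProc := PFunctor.M.mk ⟨.rep, fun _ => P⟩
def res (n : Name) (P : PiProc) : PiProc := PFunctor.M.mk ⟨.res n, fun _ => P⟩
/-- Input `a(x̃).P`. -/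
def inp (a : Name) (xs : List Name) (P : PiProc) : PiProc :=
  PFunctor.M.mk ⟨.inp a xs, fun _ => P⟩
/-- Output `ā⟨b̃⟩.P`. -/
def out (a : Name) (bs : List Name) (P : PiProc) : PiProc :=
  PFunctor.M.mk ⟨.out a bs, fun _ => P⟩
/-- The name-matching conditional `if m = n then P else Q`. -/
def ite (m n : Name) (P Q : PiProc) : PiProc :=
  PFunctor.M.mk ⟨.ite m n, fun b => bif b then Q else P⟩

end PiProc

/-- `PiFree n P` : the name `n` is free in the π process `P`. -/
inductive PiFree : Name → PiProc → Prop
  | par_l {n : Name} {P Q : PiProc} : PiFree n P → PiFree n (PiProc.par P Q)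
  | par_r {n : Name} {P Q : PiProc} : PiFree n Q → PiFree n (PiProc.par P Q)
  | rep {n : Name} {P : PiProc} : PiFree n P → PiFree n (PiProc.rep P)
  | res {n m : Name} {P : PiProc} : PiFree n P → n ≠ m → PiFree n (PiProc.res m P)
  | inp_chan {a : Name} {xs : List Name} {P : PiProc} : PiFree a (PiProc.inp a xs P)
  | inp_body {n a : Name} {xs : List Name} {P : PiProc} :
      PiFree n P → n ∉ xs → PiFree n (PiProc.inp a xs P)
  | out_chan {a : Name} {bs : List Name} {P : PiProc} : PiFree a (PiProc.out a bs P)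
  | out_arg {n a : Name} {bs : List Name} {P : PiProc} :
      n ∈ bs → PiFree n (PiProc.out a bs P)
  | out_body {n a : Name} {bs : List Name} {P : PiProc} :
      PiFree n P → PiFree n (PiProc.out a bs P)
  | ite_l {m n : Name} {P Q : PiProc} : PiFree m (PiProc.ite m n P Q)
  | ite_r {m n : Name} {P Q : PiProc} : PiFree n (PiProc.ite m n P Q)
  | ite_then {k m n : Name} {P Q : PiProc} : PiFree k P → PiFree k (PiProc.ite m n P Q)
  | ite_else {k m n : Name} {P Q : PiProc} : PiFree k Q → PiFree k (PiProc.ite m n P Q)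

/-- Free names of a π process. -/
def PiProc.fn (P : PiProc) : Set Name := {n | PiFree n P}

def piRenameStep (f : Name → Name) (P : PiProc) : PiP.Obj PiProc :=
  match PFunctor.M.dest P with
  | ⟨.nil, g⟩ => ⟨.nil, g⟩
  | ⟨.par, g⟩ => ⟨.par, g⟩
  | ⟨.rep, g⟩ => ⟨.rep, g⟩
  | ⟨.res n, g⟩ => ⟨.res (f n), g⟩
  | ⟨.inp a xs, g⟩ => ⟨.inp (f a) (xs.map f), g⟩
  | ⟨.out a bs, g⟩ => ⟨.out (f a) (bs.map f), g⟩
  | ⟨.ite m n, g⟩ => ⟨.ite (f m) (f n), g⟩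

/-- Rename all names of a π process (including binders). -/
def PiProc.rename (f : Name → Name) (P : PiProc) : PiProc :=
  PFunctor.M.corec (piRenameStep f) P

/-- π-calculus substitutions: partial maps from names to names. -/
def PiSubst : Type := Name → Option Name

/-- Apply a substitution to one name. -/
def PiSubst.app (σ : PiSubst) (n : Name) : Name := (σ n).getD n

/-- Remove a set of names from the domain of a substitution. -/
def PiSubst.removeSet (σ : PiSubst) (s : Set Name) : PiSubst :=
  fun n => if n ∈ s then none else σ n

/-- The substitution `{b̃/x̃}`. -/
def piListSubst (xs bs : List Name) : PiSubst := fun n => (xs.zip bs).lookup n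

def piSubstStep : PiProc × PiSubst → PiP.Obj (PiProc × PiSubst)
  | (P, σ) =>
    match PFunctor.M.dest P with
    | ⟨.nil, _⟩ => ⟨.nil, fun e => e.elim⟩
    | ⟨.par, g⟩ => ⟨.par, fun b => (g b, σ)⟩
    | ⟨.rep, g⟩ => ⟨.rep, fun u => (g u, σ)⟩
    | ⟨.res n, g⟩ => ⟨.res n, fun u => (g u, σ.removeSet {n})⟩
    | ⟨.inp a xs, g⟩ => ⟨.inp (σ.app a) xs, fun u => (g u, σ.removeSet {n | n ∈ xs})⟩
    | ⟨.out a bs, g⟩ => ⟨.out (σ.app a) (bs.map σ.app), fun u => (g u, σ)⟩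
    | ⟨.ite m n, g⟩ => ⟨.ite (σ.app m) (σ.app n), fun b => (g b, σ)⟩

/-- Apply a substitution to a π process (binders shadow the substitution). -/
def PiProc.subst (σ : PiSubst) (P : PiProc) : PiProc :=
  PFunctor.M.corec piSubstStep (P, σ)

/-- α-conversion for π processes. -/
inductive PiAlpha : PiProc → PiProc → Prop
  | res {a b : Name} {P : PiProc} :
      b ∉ P.fn → PiAlpha (PiProc.res a P) (PiProc.res b (P.rename (transp a b)))
  | inp {a x b : Name} {xs : List Name} {P : PiProc} :
      x ∈ xs → b ∉ xs → b ∉ (PiProc.inp a xs P).fn →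
      PiAlpha (PiProc.inp a xs P)
        (PiProc.inp a (xs.map (transp x b)) (P.rename (transp x b)))

/-- Structural equivalence of π processes (including the resolution rules of
the name-matching conditional). -/
inductive PiStructEq : PiProc → PiProc → Prop
  | refl (P) : PiStructEq P P
  | symm {P Q} : PiStructEq P Q → PiStructEq Q P
  | trans {P Q R} : PiStructEq P Q → PiStructEq Q R → PiStructEq P R
  | alpha {P Q} : PiAlpha P Q → PiStructEq P Q
  | par_nil (P) : PiStructEq (PiProc.par P PiProc.nil) P
  | par_comm (P Q) : PiStructEq (PiProc.par P Q) (PiProc.par Q P)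
  | par_assoc (P Q R) :
      PiStructEq (PiProc.par P (PiProc.par Q R)) (PiProc.par (PiProc.par P Q) R)
  | res_nil (a) : PiStructEq (PiProc.res a PiProc.nil) PiProc.nil
  | res_res (a b P) : PiStructEq (PiProc.res a (PiProc.res b P)) (PiProc.res b (PiProc.res a P))
  | res_par {a : Name} (P Q) :
      a ∉ PiProc.fn P → PiStructEq (PiProc.par P (PiProc.res a Q)) (PiProc.res a (PiProc.par P Q))
  | rep (P) : PiStructEq (PiProc.rep P) (PiProc.par P (PiProc.rep P))
  | ite_eq (m : Name) (P Q) : PiStructEq (PiProc.ite m m P Q) P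
  | ite_ne {m n : Name} (P Q) : m ≠ n → PiStructEq (PiProc.ite m n P Q) Q
  | par_congr {P P' Q Q'} :
      PiStructEq P P' → PiStructEq Q Q' → PiStructEq (PiProc.par P Q) (PiProc.par P' Q')
  | res_congr {P P'} (a) : PiStructEq P P' → PiStructEq (PiProc.res a P) (PiProc.res a P')
  | rep_congr {P P'} : PiStructEq P P' → PiStructEq (PiProc.rep P) (PiProc.rep P')
  | inp_congr {P P'} (a xs) : PiStructEq P P' → PiStructEq (PiProc.inp a xs P) (PiProc.inp a xs P')
  | out_congr {P P'} (a bs) : PiStructEq P P' → PiStructEq (PiProc.out a bs P) (PiProc.out a bs P')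
  | ite_congr {P P' Q Q'} (m n) :
      PiStructEq P P' → PiStructEq Q Q' →
      PiStructEq (PiProc.ite m n P Q) (PiProc.ite m n P' Q')

/-- Reduction of π processes:
`m̄⟨b̃⟩.P | n(x̃).Q → P | {b̃/x̃}Q` when `m = n` and `|b̃| = |x̃|`,
closed under parallel, restriction and structural equivalence. -/
inductive PiReduces : PiProc → PiProc → Prop
  | comm {a : Name} {bs xs : List Name} {P Q : PiProc} :
      bs.length = xs.length →
      PiReduces (PiProc.par (PiProc.out a bs P) (PiProc.inp a xs Q))
        (PiProc.par P (Q.subst (piListSubst xs bs)))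
  | par {P P'} (Q) : PiReduces P P' → PiReduces (PiProc.par P Q) (PiProc.par P' Q)
  | res {P P'} (n) : PiReduces P P' → PiReduces (PiProc.res n P) (PiProc.res n P')
  | struct {P P' Q Q'} :
      PiStructEq P P' → PiReduces P' Q' → PiStructEq Q' Q → PiReduces P Q

/-! ### The chained-channel encoding of Turing Machines into the π-calculus -/

/-- States of the corecursion generating the encoding of one side of the tape:
the infinite nesting `(ν x_k)( c̄ₖ⟨s_k, x_k⟩ | … )`. -/
inductive ChainSt : Type
  | start (c : Name) (k : ℕ)
  | inside (c : Name) (k : ℕ)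
  | output (c : Name) (k : ℕ)
  | done

def chainStep (f x : ℕ → Name) : ChainSt → PiP.Obj ChainSt
  | .start c k => ⟨.res (x k), fun _ => ChainSt.inside c k⟩
  | .inside c k => ⟨.par, fun b => bif b then ChainSt.start (x k) (k + 1) else ChainSt.output c k⟩
  | .output c k => ⟨.out c [f k, x k], fun _ => ChainSt.done⟩
  | .done => ⟨.nil, fun e => e.elim⟩

/-- The chained-channel encoding of one side of the tape (listed from the head
outward): each cell is output, on the channel of that cell, together with a
fresh (restricted) channel `x k` for the next cell:
`⟦…⟧ = (νx₁) ( c̄⟨s₁,x₁⟩ | (νx₂) ( x̄₁⟨s₂,x₂⟩ | … ) )`. -/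
def chain (f x : ℕ → Name) (c : Name) : PiProc :=
  PFunctor.M.corec (chainStep f x) (ChainSt.start c 0)

/-- Encoding of the current state and tape:
`⟦T⟧_{q} = q s_h⟨l,r⟩.0 | ⟦left⟧_L | ⟦right⟧_R`, where `ch q s` is the distinct
channel name reserved for the pair of state `q` and symbol `s`. -/
def piEncodeTape (ch : Name → Name → Name) (l r : Name) (xL xR : ℕ → Name)
    (T : Tape) (q : Name) : PiProc :=
  PiProc.par (PiProc.out (ch q T.head) [l, r] PiProc.nil)
    (PiProc.par (chain T.left xL l) (chain T.right xR r))

/-- The cascade of name-matching conditionals detecting the new head symbol. -/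
def iteChain (ch : Name → Name → Name) (qj sc l1 r1 : Name) : List Name → PiProc
  | [] => PiProc.nil
  | s :: ss => PiProc.ite sc s (PiProc.out (ch qj s) [l1, r1] PiProc.nil)
      (iteChain ch qj sc l1 r1 ss)

/-- π encoding of a transition tuple (`syms` enumerates the alphabet `S`). -/
def piEncodeTuple (ch : Name → Name → Name) (lc rc sc l1 r1 : Name)
    (syms : List Name) : Tuple → PiProc
  | (qi, s1, s2, .L, qj) =>
      PiProc.inp (ch qi s1) [lc, rc]
        (PiProc.inp lc [sc, l1]
          (PiProc.res r1
            (PiProc.par (iteChain ch qj sc l1 r1 syms)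
              (PiProc.out r1 [s2, rc] PiProc.nil))))
  | (qi, s1, s2, .R, qj) =>
      PiProc.inp (ch qi s1) [lc, rc]
        (PiProc.inp rc [sc, r1]
          (PiProc.res l1
            (PiProc.par (iteChain ch qj sc l1 r1 syms)
              (PiProc.out l1 [s2, lc] PiProc.nil))))

/-- Parallel composition of a list of π processes. -/
def piBigPar : List PiProc → PiProc
  | [] => PiProc.nil
  | P :: Ps => PiProc.par P (piBigPar Ps)

/-- π encoding `⟦F⟧ = ∏_{u ∈ F} !⟦u⟧` of the transition function. -/
def piEncodeTrans (ch : Name → Name → Name) (lc rc sc l1 r1 : Name)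
    (syms : List Name) (F : Finset Tuple) : PiProc :=
  piBigPar (F.toList.map fun u => PiProc.rep (piEncodeTuple ch lc rc sc l1 r1 syms u))

/-- π encoding of a Turing Machine configuration:
`⟦(S,Q,F,T,q)⟧ = (νl)(νr)( ⟦T⟧_q | ⟦F⟧ )`. -/
def piEncodeTM (ch : Name → Name → Name) (l r : Name) (xL xR : ℕ → Name)
    (lc rc sc l1 r1 : Name) (M : Machine) (T : Tape) (q : Name) : PiProc :=
  PiProc.res l (PiProc.res r
    (PiProc.par (piEncodeTape ch l r xL xR T q)
      (piEncodeTrans ch lc rc sc l1 r1 M.symbols.toList M.trans)))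

/-- The channel names `ch q s` (one for each pair of a state and a symbol), the
names `l`, `r` and the fresh chaining names `xL i`, `xR i` are all distinct and
reserved (not among the symbols and states of the machine). -/
def PiFreshBase (M : Machine) (ch : Name → Name → Name) (l r : Name)
    (xL xR : ℕ → Name) : Prop :=
  (∀ q s q' s', ch q s = ch q' s' → q = q' ∧ s = s') ∧
  (∀ q s, ch q s ∉ M.symbols ∧ ch q s ∉ M.states ∧ ch q s ≠ l ∧ ch q s ≠ r ∧
    (∀ i, ch q s ≠ xL i ∧ ch q s ≠ xR i)) ∧
  l ≠ r ∧ l ∉ M.symbols ∧ l ∉ M.states ∧ r ∉ M.symbols ∧ r ∉ M.states ∧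
  Function.Injective xL ∧ Function.Injective xR ∧ (∀ i j, xL i ≠ xR j) ∧
  (∀ i, xL i ∉ M.symbols ∧ xL i ∉ M.states ∧ xL i ≠ l ∧ xL i ≠ r) ∧
  (∀ i, xR i ∉ M.symbols ∧ xR i ∉ M.states ∧ xR i ≠ l ∧ xR i ≠ r)

/-- The five binder names used in the encoding of transition tuples are
pairwise distinct and reserved. -/
def PiFreshBinders (M : Machine) (ch : Name → Name → Name) (l r : Name)
    (xL xR : ℕ → Name) (lc rc sc l1 r1 : Name) : Prop :=
  [lc, rc, sc, l1, r1].Nodup ∧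
  ∀ n ∈ [lc, rc, sc, l1, r1], n ∉ M.symbols ∧ n ∉ M.states ∧ n ≠ l ∧ n ≠ r ∧
    (∀ i, n ≠ xL i ∧ n ≠ xR i) ∧ (∀ q s, n ≠ ch q s)

/-! A reduction needs an input prefix in an active position, i.e. one reachable without crossing
a prefix or a dead branch of a conditional. Having no active input is invariant under structural
congruence (α-conversion is an injective renaming, and a conditional is equivalent to its live
branch), and the tape encoding has none: it is built from outputs by restriction and parallel
composition only. -/

namespace PiProc

@[elab_as_elim]
theorem cases {motive : PiProc → Prop} (hnil : motive nil)
    (hpar : ∀ P Q, motive (par P Q)) (hrep : ∀ P, motive (rep P))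
    (hres : ∀ n P, motive (res n P)) (hinp : ∀ a xs P, motive (inp a xs P))
    (hout : ∀ a bs P, motive (out a bs P)) (hite : ∀ m n P Q, motive (ite m n P Q))
    (P : PiProc) : motive P := by
  induction P using PFunctor.M.casesOn' with | _ h g => ?_
  have bool_eta : ∀ g : Bool → PiProc, g = fun b => bif b then g true else g false :=
    fun g => funext fun b => by cases b <;> rfl
  cases h with
  | nil => rw [show g = fun e => e.elim from funext fun e => e.elim]; exact hnil
  | par => rw [bool_eta g]; exact hpar (g false) (g true)
  | rep => exact hrep (g ())
  | res n => exact hres n (g ())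
  | inp a xs => exact hinp a xs (g ())
  | out a bs => exact hout a bs (g ())
  | ite m n => rw [bool_eta g]; exact hite m n (g false) (g true)

section Rename

variable (f : Name → Name)

theorem rename_eq_mk (P : PiProc) :
    P.rename f = PFunctor.M.mk (PiP.map (rename f) (piRenameStep f P)) := by
  rw [← PFunctor.M.mk_dest (P.rename f), rename, PFunctor.M.dest_corec]; rfl

@[simp] theorem rename_nil : nil.rename f = nil := by
  rw [rename_eq_mk]; exact congrArg _ (Sigma.ext rfl (heq_of_eq (funext fun e => e.elim)))

@[simp] theorem rename_par (P Q : PiProc) :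
    (par P Q).rename f = par (P.rename f) (Q.rename f) := by
  rw [rename_eq_mk]
  exact congrArg _ (Sigma.ext rfl (heq_of_eq (funext fun b => by cases b <;> rfl)))

@[simp] theorem rename_rep (P : PiProc) : (rep P).rename f = rep (P.rename f) := by
  rw [rename_eq_mk]; rfl

@[simp] theorem rename_res (n : Name) (P : PiProc) :
    (res n P).rename f = res (f n) (P.rename f) := by
  rw [rename_eq_mk]; rfl

@[simp] theorem rename_inp (a : Name) (xs : List Name) (P : PiProc) :
    (inp a xs P).rename f = inp (f a) (xs.map f) (P.rename f) := by
  rw [rename_eq_mk]; rfl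

@[simp] theorem rename_out (a : Name) (bs : List Name) (P : PiProc) :
    (out a bs P).rename f = out (f a) (bs.map f) (P.rename f) := by
  rw [rename_eq_mk]; rfl

@[simp] theorem rename_ite (m n : Name) (P Q : PiProc) :
    (ite m n P Q).rename f = ite (f m) (f n) (P.rename f) (Q.rename f) := by
  rw [rename_eq_mk]
  exact congrArg _ (Sigma.ext rfl (heq_of_eq (funext fun b => by cases b <;> rfl)))

end Rename

def ActiveChild (P Q : PiProc) : Prop :=
  match PFunctor.M.dest P with
  | ⟨.par, g⟩ => Q = g false ∨ Q = g true
  | ⟨.rep, g⟩ => Q = g ()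
  | ⟨.res _, g⟩ => Q = g ()
  | ⟨.ite m n, g⟩ => Q = if m = n then g false else g true -- `g false` is the then-branch
  | ⟨.nil, _⟩ => False
  | ⟨.inp _ _, _⟩ => False
  | ⟨.out _ _, _⟩ => False

def IsInput (P : PiProc) : Prop := ∃ a xs, (PFunctor.M.dest P).1 = .inp a xs

def NoActiveInput (P : PiProc) : Prop :=
  ∀ Q, Relation.ReflTransGen ActiveChild P Q → ¬ Q.IsInput

theorem noActiveInput_iff {P : PiProc} :
    P.NoActiveInput ↔ ¬ P.IsInput ∧ ∀ Q, ActiveChild P Q → Q.NoActiveInput := by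
  refine ⟨fun h => ⟨h P .refl, fun Q hc R hQR => h R (.head hc hQR)⟩, ?_⟩
  rintro ⟨hP, hchild⟩ R hPR
  rcases Relation.ReflTransGen.cases_head hPR with rfl | ⟨Q, hc, hQR⟩
  exacts [hP, hchild Q hc R hQR]

theorem noActiveInput_coinduct {S : Set PiProc}
    (hS : ∀ P ∈ S, ¬ P.IsInput ∧ ∀ Q, ActiveChild P Q → Q ∈ S) {P : PiProc}
    (hP : P ∈ S) :
    P.NoActiveInput := by
  have reach_mem : ∀ Q, Relation.ReflTransGen ActiveChild P Q → Q ∈ S := fun Q hPQ => by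
    induction hPQ with
    | refl => exact hP
    | tail _ hc ih => exact (hS _ ih).2 _ hc
  exact fun Q hPQ => (hS Q (reach_mem Q hPQ)).1

section Constructors

variable {P Q R : PiProc} {a m n : Name} {xs : List Name}

@[simp] theorem not_activeChild_nil : ¬ ActiveChild nil R := id
@[simp] theorem activeChild_par : ActiveChild (par P Q) R ↔ R = P ∨ R = Q := Iff.rfl
@[simp] theorem activeChild_rep : ActiveChild (rep P) R ↔ R = P := Iff.rfl
@[simp] theorem activeChild_res : ActiveChild (res n P) R ↔ R = P := Iff.rfl
@[simp] theorem not_activeChild_inp : ¬ ActiveChild (inp a xs P) R := id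
@[simp] theorem not_activeChild_out : ¬ ActiveChild (out a xs P) R := id
@[simp] theorem activeChild_ite :
    ActiveChild (ite m n P Q) R ↔ R = if m = n then P else Q := Iff.rfl

@[simp] theorem not_isInput_nil : ¬ nil.IsInput := nofun
@[simp] theorem not_isInput_par : ¬ (par P Q).IsInput := nofun
@[simp] theorem not_isInput_rep : ¬ (rep P).IsInput := nofun
@[simp] theorem not_isInput_res : ¬ (res n P).IsInput := nofun
@[simp] theorem isInput_inp : (inp a xs P).IsInput := ⟨a, xs, rfl⟩
@[simp] theorem not_isInput_out : ¬ (out a xs P).IsInput := nofun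
@[simp] theorem not_isInput_ite : ¬ (ite m n P Q).IsInput := nofun

@[simp] theorem noActiveInput_nil : nil.NoActiveInput := by rw [noActiveInput_iff]; simp

@[simp] theorem noActiveInput_par :
    (par P Q).NoActiveInput ↔ P.NoActiveInput ∧ Q.NoActiveInput := by
  rw [noActiveInput_iff]; simp

@[simp] theorem noActiveInput_rep : (rep P).NoActiveInput ↔ P.NoActiveInput := by
  rw [noActiveInput_iff]; simp

@[simp] theorem noActiveInput_res : (res n P).NoActiveInput ↔ P.NoActiveInput := by
  rw [noActiveInput_iff]; simp

@[simp] theorem not_noActiveInput_inp : ¬ (inp a xs P).NoActiveInput := by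
  rw [noActiveInput_iff]; simp

@[simp] theorem noActiveInput_out : (out a xs P).NoActiveInput := by
  rw [noActiveInput_iff]; simp

@[simp] theorem noActiveInput_ite :
    (ite m n P Q).NoActiveInput ↔ (if m = n then P else Q).NoActiveInput := by
  rw [noActiveInput_iff]; simp

end Constructors

section InjectiveRename

variable {f : Name → Name}

@[simp] theorem isInput_rename {P : PiProc} : (P.rename f).IsInput ↔ P.IsInput := by
  cases P using PiProc.cases <;> simp

theorem activeChild_rename_iff (hf : Function.Injective f) {P Q : PiProc} :
    ActiveChild (P.rename f) Q ↔ ∃ Q', ActiveChild P Q' ∧ Q = Q'.rename f := by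
  cases P using PiProc.cases <;> simp [hf.eq_iff, apply_ite (rename f)]

theorem noActiveInput_rename (hf : Function.Injective f) {P : PiProc} :
    (P.rename f).NoActiveInput ↔ P.NoActiveInput := by
  constructor
  · refine fun h => noActiveInput_coinduct (S := {Q | (Q.rename f).NoActiveInput}) ?_ h
    intro Q (hQ : (Q.rename f).NoActiveInput)
    rw [noActiveInput_iff, isInput_rename] at hQ
    exact ⟨hQ.1, fun Q' hc => hQ.2 _ ((activeChild_rename_iff hf).2 ⟨Q', hc, rfl⟩)⟩
  · refine fun h => noActiveInput_coinduct
      (S := {R | ∃ Q, Q.NoActiveInput ∧ R = Q.rename f}) ?_ ⟨P, h, rfl⟩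
    rintro _ ⟨Q, hQ, rfl⟩
    rw [noActiveInput_iff] at hQ
    refine ⟨isInput_rename.not.2 hQ.1, fun R hc => ?_⟩
    obtain ⟨Q', hc', rfl⟩ := (activeChild_rename_iff hf).1 hc
    exact ⟨Q', hQ.2 Q' hc', rfl⟩

end InjectiveRename

theorem ActiveChild.exists_eq_child {P Q : PiProc} (h : ActiveChild P Q) :
    ∃ i, Q = (PFunctor.M.dest P).2 i := by
  cases P using PiProc.cases with
  | hpar => rcases activeChild_par.1 h with rfl | rfl; exacts [⟨false, rfl⟩, ⟨true, rfl⟩]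
  | hrep => exact ⟨(), activeChild_rep.1 h⟩
  | hres => exact ⟨(), activeChild_res.1 h⟩
  | hite m n =>
      rw [activeChild_ite] at h
      split_ifs at h
      exacts [⟨false, h⟩, ⟨true, h⟩]
  | _ => simp at h

theorem noActiveInput_corec {S : Type} (g : S → PiP.Obj S)
    (hg : ∀ s a xs, (g s).1 ≠ .inp a xs) (s : S) :
    NoActiveInput (PFunctor.M.corec g s) := by
  refine noActiveInput_coinduct (S := {P : PiProc | ∃ s, P = PFunctor.M.corec g s}) ?_
    ⟨s, rfl⟩
  rintro _ ⟨s, rfl⟩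
  refine ⟨fun ⟨a, xs, h⟩ => hg s a xs ?_, fun Q hc => ?_⟩
  · rwa [PFunctor.M.dest_corec] at h
  · obtain ⟨i, rfl⟩ := hc.exists_eq_child
    revert i
    rw [PFunctor.M.dest_corec]
    exact fun i _ => ⟨_, rfl⟩

end PiProc

theorem transp_injective (a b : Name) : Function.Injective (transp a b) := by
  convert (Equiv.swap a b).injective
  ext n
  exact (Equiv.swap_apply_def a b n).symm

open PiProc in
theorem PiStructEq.noActiveInput_iff {P Q : PiProc} (h : PiStructEq P Q) :
    P.NoActiveInput ↔ Q.NoActiveInput := by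
  induction h with
  | refl => rfl
  | symm _ ih => exact ih.symm
  | trans _ _ ih₁ ih₂ => exact ih₁.trans ih₂
  | alpha h =>
      cases h with
      | res => simp [noActiveInput_rename (transp_injective _ _)]
      | inp => simp
  | ite_eq | ite_ne => simp [*]
  | par_congr _ _ ih₁ ih₂ => simp [ih₁, ih₂]
  | res_congr _ _ ih | rep_congr _ ih => simp [ih]
  | ite_congr m n _ _ ih₁ ih₂ =>
      rw [noActiveInput_ite, noActiveInput_ite]
      split_ifs <;> assumption
  | _ => simp [and_comm, and_assoc]

theorem PiReduces.not_noActiveInput {P Q : PiProc} (h : PiReduces P Q) : ¬ P.NoActiveInput := by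
  induction h with
  | comm => simp
  | par _ _ ih => simpa using fun hP _ => ih hP
  | res _ _ ih => simpa using ih
  | struct h₁ _ _ ih => rwa [h₁.noActiveInput_iff]

theorem noActiveInput_chain (f x : ℕ → Name) (c : Name) : (chain f x c).NoActiveInput :=
  PiProc.noActiveInput_corec (chainStep f x) (by rintro (_ | _ | _ | _) _ _ ⟨⟩)
    (.start c 0)

theorem noActiveInput_piEncodeTape (ch : Name → Name → Name) (l r : Name) (xL xR : ℕ → Name)
    (T : Tape) (q : Name) : (piEncodeTape ch l r xL xR T q).NoActiveInput := by
  simp [piEncodeTape, noActiveInput_chain]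

theorem pi_tape_representation_no_reduction_general
    (ch : Name → Name → Name) (l r : Name) (xL xR : ℕ → Name)
    (T : Tape) (qi : Name) :
    ¬ ∃ Q : PiProc, PiReduces (piEncodeTape ch l r xL xR T qi) Q :=
  fun ⟨_, h⟩ => h.not_noActiveInput (noActiveInput_piEncodeTape ch l r xL xR T qi)

/-- In the encoding of Turing Machines into synchronous
polyadic π-calculus, the process
`q_i s_h⟨l,r⟩.0 | ⟦left⟧_L | ⟦right⟧_R` representing the current state and
tape does not reduce. -/
theorem pi_tape_representation_no_reduction (M : Machine)
    (ch : Name → Name → Name) (l r : Name) (xL xR : ℕ → Name)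
    (hfresh : PiFreshBase M ch l r xL xR) (T : Tape) (qi : Name) :
    ¬ ∃ Q : PiProc, PiReduces (piEncodeTape ch l r xL xR T qi) Q :=
  pi_tape_representation_no_reduction_general ch l r xL xR T qi

end ACPC
end
end
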